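/- For every K, all β, a, b ∈ ℝ^K, all folding-angle vectors ρ, ρ₀ ∈ ℝ^K, and all x, y, z ∈ ℝ: T_K(β, a, b, −ρ) · T_K(β, a, b, −ρ₀)⁻¹ · (x, y, −z, 1)ᵀ = D₄ · T_K(β, a, b, ρ) · T_K(β, a, b, ρ₀)⁻¹ · (x, y, z, 1)ᵀ, where D₄ = diag(1, 1, −1, 1). (In particular T_K(β, a, b, ρ₀) is always invertible, being a product of invertible homogeneous matrices.) In origami terms: the rigidly folded state with all folding angles negated is the mirror image, through the plane of the fixed panel, of the original rigidly folded state. -/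

import Mathlib

/-! The reflection `D₄` in the plane `z = 0` is an involution that commutes with every `H(β, a, b)`
(a rotation about the `z`-axis followed by a translation in that plane) and conjugates `X(ρ)`
into `X(−ρ)`. Hence `T_K(β, a, b, −ρ) = D₄ T_K(β, a, b, ρ) D₄`, and the two `D₄`s around
`T_K(ρ) T_K(ρ₀)⁻¹` account for the mirror image on the left and the sign of `z` on the right. -/

open Matrix Real

/-- The homogeneous matrix `H(β, a, b)`: rotation `R_z(β)` with translation `(a, b, 0)`. -/
noncomputable def Hmat (β a b : ℝ) : Matrix (Fin 4) (Fin 4) ℝ :=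
  !![Real.cos β, -Real.sin β, 0, a;
     Real.sin β,  Real.cos β, 0, b;
     0, 0, 1, 0;
     0, 0, 0, 1]

/-- The homogeneous matrix `X(ρ)`: rotation `R_x(ρ)` with zero translation. -/
noncomputable def Xmat (ρ : ℝ) : Matrix (Fin 4) (Fin 4) ℝ :=
  !![1, 0, 0, 0;
     0, Real.cos ρ, -Real.sin ρ, 0;
     0, Real.sin ρ,  Real.cos ρ, 0;
     0, 0, 0, 1]

/-- The single-hole consistency matrix `T_K(β, a, b, ρ) = ∏_{k=1}^K H(β_k, a_k, b_k)·X(ρ_k)`,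
the product taken in order of increasing `k`. -/
noncomputable def Th (K : ℕ) (β a b ρ : Fin K → ℝ) : Matrix (Fin 4) (Fin 4) ℝ :=
  (List.ofFn (fun k : Fin K => Hmat (β k) (a k) (b k) * Xmat (ρ k))).prod

/-- The matrix `D₄ = diag(1, 1, −1, 1)`. -/
noncomputable def D4 : Matrix (Fin 4) (Fin 4) ℝ :=
  !![1, 0, 0, 0; 0, 1, 0, 0; 0, 0, -1, 0; 0, 0, 0, 1]

theorem List.prod_map_conj_of_mul_self_eq_one {M : Type*} [Monoid M] {s : M} (hs : s * s = 1)
    (l : List M) : (l.map fun m => s * m * s).prod = s * l.prod * s := by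
  induction l with
  | nil => simp [hs]
  | cons m l ih =>
    rw [List.map_cons, List.prod_cons, List.prod_cons, ih]
    simp only [mul_assoc]
    rw [← mul_assoc s s, hs, one_mul]

theorem D4_mul_D4 : D4 * D4 = 1 := by
  ext i j
  fin_cases i <;> fin_cases j <;> simp [D4, mul_apply, Fin.sum_univ_four]

theorem inv_D4 : D4⁻¹ = D4 :=
  inv_eq_left_inv D4_mul_D4

theorem D4_mul_Hmat (β a b : ℝ) : D4 * Hmat β a b = Hmat β a b * D4 := by
  ext i j
  fin_cases i <;> fin_cases j <;> simp [D4, Hmat, mul_apply, Fin.sum_univ_four]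

theorem D4_mul_Xmat_mul_D4 (ρ : ℝ) : D4 * Xmat ρ * D4 = Xmat (-ρ) := by
  ext i j
  fin_cases i <;> fin_cases j <;> simp [D4, Xmat, mul_apply, Fin.sum_univ_four]

theorem D4_mulVec (x y z : ℝ) : D4 *ᵥ ![x, y, z, 1] = ![x, y, -z, 1] := by
  ext i
  fin_cases i <;> simp [D4, mulVec, dotProduct, Fin.sum_univ_four]

theorem det_Hmat (β a b : ℝ) : (Hmat β a b).det = 1 := by
  simp [Hmat, det_succ_row_zero, Fin.sum_univ_succ, Fin.succAbove, ← sq]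

theorem det_Xmat (ρ : ℝ) : (Xmat ρ).det = 1 := by
  simp [Xmat, det_succ_row_zero, Fin.sum_univ_succ, ← sq]

theorem isUnit_Th (K : ℕ) (β a b ρ : Fin K → ℝ) : IsUnit (Th K β a b ρ) := by
  refine List.prod_isUnit fun M hM => ?_
  obtain ⟨k, rfl⟩ := List.mem_ofFn.mp hM
  simp [isUnit_iff_isUnit_det, det_Hmat, det_Xmat]

theorem Th_neg (K : ℕ) (β a b ρ : Fin K → ℝ) :
    Th K β a b (fun k => -ρ k) = D4 * Th K β a b ρ * D4 := by
  rw [Th, Th, ← List.prod_map_conj_of_mul_self_eq_one D4_mul_D4, List.map_ofFn]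
  congr 2
  ext1 k
  rw [Function.comp_apply, ← mul_assoc, D4_mul_Hmat, mul_assoc, mul_assoc, ← mul_assoc D4,
    D4_mul_Xmat_mul_D4]

/-- the rigidly folded state with all folding angles negated is the mirror image,
through the plane of the fixed panel, of the original rigidly folded state:
`T_K(β,a,b,−ρ)·T_K(β,a,b,−ρ₀)⁻¹·(x,y,−z,1)ᵀ = D₄·T_K(β,a,b,ρ)·T_K(β,a,b,ρ₀)⁻¹·(x,y,z,1)ᵀ`. -/
theorem mirror_image_of_negated_folding_angles (K : ℕ) (β a b ρ ρ₀ : Fin K → ℝ)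
    (x y z : ℝ) :
    IsUnit (Th K β a b ρ₀) ∧
    (Th K β a b (fun k => -(ρ k)) * (Th K β a b (fun k => -(ρ₀ k)))⁻¹).mulVec ![x, y, -z, 1] =
      (D4 * Th K β a b ρ * (Th K β a b ρ₀)⁻¹).mulVec ![x, y, z, 1] := by
  refine ⟨isUnit_Th K β a b ρ₀, ?_⟩
  have conj : Th K β a b (fun k => -(ρ k)) * (Th K β a b (fun k => -(ρ₀ k)))⁻¹ =
      D4 * (Th K β a b ρ * (Th K β a b ρ₀)⁻¹) * D4 := by
    rw [Th_neg, Th_neg, Matrix.mul_inv_rev, Matrix.mul_inv_rev, inv_D4]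
    simp only [mul_assoc, ← mul_assoc D4 D4, D4_mul_D4, one_mul]
  rw [conj, ← D4_mulVec, mulVec_mulVec, mul_assoc _ D4, D4_mul_D4, mul_one, mul_assoc]
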